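/- arXiv:1804.01549 — 3 statements merged into one kernel-verified Lean document; each statement's English description precedes it below -/
import Mathlib

section
/- Let X be a compact Hausdorff space, r : X → X a retraction, and A, B subsets of X with A ⊆ r(X), B countable, such that: B is discrete in the subspace X \ Y for some set Y disjoint from B with cl_X(B) \ B ⊆ Y, and cl_X(B) \ B ⊆ r(X). Define R : AD(X) → AD(X) by R(x,1) = (x,1) if x ∈ A ∪ B, and R(x,i) = (r(x),0) otherwise. Then R is a continuous retraction on the Alexandroff duplicate AD(X). -/
/-
Off `(A ∪ B) × {1}` the map `R` is `q ↦ (r q.1, 0)`, which is continuous, and the points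
`(x, 1)` are isolated. What remains is continuity at `(x, 0)` along the points `(u, 1)` with
`u ∈ A ∪ B`, `u ≠ x`, which `R` fixes: they must converge to `(r x, 0)` while avoiding
`(r x, 1)`, i.e. `𝓝[(A ∪ B) \ {x}] x ≤ 𝓝[≠] (r x)` in `X`. Near `x`, points of `A` are
fixed by the continuous `r`, so they tend to `r x`; points of the discrete set `B` other than
`x` only accumulate at `x ∈ closure B \ B`, where `r x = x`. So the filter lies below both
`𝓝 x` and `𝓝 (r x)`, and when `r x ≠ x` the T1 axiom keeps it off `r x`.
-/

/-- The Alexandroff duplicate of `X`, as a type. -/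
def AD (X : Type*) := X × Bool

/-- The Alexandroff duplicate topology: all points of `X × {1}` are isolated and the basic
neighbourhoods of `(x, 0)` are the sets `(U × {0,1}) \ {(x,1)}` with `U` an open
neighbourhood of `x`. -/
instance (X : Type*) [TopologicalSpace X] : TopologicalSpace (AD X) where
  IsOpen S := ∀ x : X, ((x, false) : X × Bool) ∈ S →
    ∃ U : Set X, IsOpen U ∧ x ∈ U ∧
      (U ×ˢ (Set.univ : Set Bool)) \ {((x, true) : X × Bool)} ⊆ S
  isOpen_univ := fun x _ => ⟨Set.univ, isOpen_univ, trivial, fun _ _ => trivial⟩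
  isOpen_inter := by
    intro S T hS hT x hx
    obtain ⟨U, hU, hxU, hUS⟩ := hS x hx.1
    obtain ⟨V, hV, hxV, hVT⟩ := hT x hx.2
    refine ⟨U ∩ V, hU.inter hV, ⟨hxU, hxV⟩, fun p hp => ?_⟩
    exact ⟨hUS ⟨⟨hp.1.1.1, hp.1.2⟩, hp.2⟩, hVT ⟨⟨hp.1.1.2, hp.1.2⟩, hp.2⟩⟩
  isOpen_sUnion := by
    intro 𝒮 h x hx
    obtain ⟨S, hS, hxS⟩ := hx
    obtain ⟨U, hU, hxU, hUS⟩ := h S hS x hxS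
    exact ⟨U, hU, hxU, fun p hp => ⟨S, hS, hUS hp⟩⟩

open Filter Topology Set

section

variable {X : Type*} [TopologicalSpace X]

theorem nhdsWithin_le_nhds_apply_of_eqOn_id {f : X → X} {s : Set X} {x : X}
    (hf : ContinuousAt f x) (hs : EqOn f id s) : 𝓝[s] x ≤ 𝓝 (f x) :=
  tendsto_id'.1 <|
    (hf.tendsto.mono_left nhdsWithin_le_nhds).congr' (eventually_nhdsWithin_of_forall hs)

theorem IsDiscrete.nhdsWithin_diff_singleton_le_nhds_apply {f : X → X} {B : Set X}
    (hB : IsDiscrete B) (hf : ∀ x ∈ closure B \ B, f x = x) (x : X) :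
    𝓝[B \ {x}] x ≤ 𝓝 (f x) := by
  by_cases hxB : x ∈ B
  · rw [sdiff_eq_compl_inter, nhdsWithin_inter', isDiscrete_iff_nhdsNE.1 hB x hxB]
    exact bot_le
  by_cases hx : x ∈ closure B
  · rw [hf x ⟨hx, hxB⟩]
    exact nhdsWithin_le_nhds
  · rw [notMem_closure_iff_nhdsWithin_eq_bot.1 (fun h => hx (closure_mono sdiff_subset h))]
    exact bot_le

theorem nhdsWithin_le_nhdsNE_of_le_nhds [T1Space X] {s : Set X} {x y : X} (hx : x ∉ s)
    (h : 𝓝[s] x ≤ 𝓝 y) : 𝓝[s] x ≤ 𝓝[≠] y := by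
  rcases eq_or_ne x y with rfl | hxy
  · exact nhdsWithin_mono x fun u hu hux => hx (hux ▸ hu)
  · exact le_inf h (le_principal_iff.2 (mem_nhdsWithin_of_mem_nhds
      (isOpen_compl_singleton.mem_nhds hxy)))

theorem nhdsWithin_union_diff_singleton_le_nhdsNE [T1Space X] {r : X → X} (hr : Continuous r)
    {A B : Set X} (hA : ∀ x ∈ A, r x = x) (hB : IsDiscrete B)
    (hclB : ∀ x ∈ closure B \ B, r x = x) (x : X) :
    𝓝[(A ∪ B) \ {x}] x ≤ 𝓝[≠] (r x) := by
  refine nhdsWithin_le_nhdsNE_of_le_nhds (fun h => h.2 rfl) ?_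
  calc 𝓝[(A ∪ B) \ {x}] x ≤ 𝓝[A ∪ B \ {x}] x :=
        nhdsWithin_mono x fun u hu => hu.1.imp id fun huB => ⟨huB, hu.2⟩
    _ = 𝓝[A] x ⊔ 𝓝[B \ {x}] x := nhdsWithin_union ..
    _ ≤ 𝓝 (r x) := sup_le (nhdsWithin_le_nhds_apply_of_eqOn_id hr.continuousAt hA)
        (hB.nhdsWithin_diff_singleton_le_nhds_apply hclB x)

end

namespace AD

variable {X : Type*}

theorem apply_apply_of_idempotent {r : X → X} (hrr : ∀ x, r (r x) = r x) {D : Set X}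
    {R : AD X → AD X} (hR1 : ∀ x ∈ D, R (x, true) = (x, true))
    (hR2 : ∀ x ∉ D, R (x, true) = (r x, false))
    (hR3 : ∀ x, R (x, false) = (r x, false)) (q : AD X) : R (R q) = R q := by
  obtain ⟨x, _ | _⟩ := q
  · rw [hR3, hR3, hrr]
  · by_cases hx : x ∈ D
    · rw [hR1 x hx, hR1 x hx]
    · rw [hR2 x hx, hR3, hrr]

variable [TopologicalSpace X]

theorem isOpen_iff {S : Set (AD X)} : IsOpen S ↔ ∀ x : X, ((x, false) : AD X) ∈ S →
    ∃ U : Set X, IsOpen U ∧ x ∈ U ∧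
      ∀ u ∈ U, ∀ b : Bool, (u = x → b = false) → ((u, b) : AD X) ∈ S := by
  refine forall_congr' fun x => imp_congr_right fun _ => exists_congr fun U =>
    and_congr_right' (and_congr_right' ⟨fun h u hu b hb => h ⟨⟨hu, trivial⟩, ?_⟩, ?_⟩)
  · rintro ⟨⟩
    exact Bool.false_ne_true (hb rfl).symm
  · rintro h ⟨u, b⟩ ⟨⟨hu, -⟩, hne⟩
    exact h u hu b fun hux => by subst hux; simpa using hne

theorem isOpen_singleton_true (x : X) : IsOpen ({(x, true)} : Set (AD X)) :=
  isOpen_iff.2 fun _ h => nomatch h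

theorem continuous_fst : Continuous fun q : AD X => q.1 :=
  continuous_def.2 fun U hU => isOpen_iff.2 fun _ hx => ⟨U, hU, hx, fun _ hu _ _ => hu⟩

theorem continuous_mk_false : Continuous (Y := AD X) fun x => (x, false) :=
  continuous_def.2 fun S hS => isOpen_iff_forall_mem_open.2 fun x hx => by
    obtain ⟨U, hU, hxU, hUS⟩ := isOpen_iff.1 hS x hx
    exact ⟨U, fun u hu => hUS u hu false fun _ => rfl, hU, hxU⟩

instance [T1Space X] : T1Space (AD X) := by
  refine ⟨fun ⟨y, c⟩ => isOpen_compl_iff.1 (isOpen_iff.2 fun x hx => ?_)⟩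
  by_cases hyx : y = x
  · subst hyx
    refine ⟨univ, isOpen_univ, trivial, fun u _ b hb hub => ?_⟩
    cases hub
    exact hx (by rw [hb rfl]; rfl)
  · exact ⟨{y}ᶜ, isOpen_compl_singleton, Ne.symm hyx,
      fun u hu b _ hub => hu (congrArg Prod.fst hub)⟩

/- The ascriptions sit on the filters: `𝓝 ((x, false) : AD X)` would still be taken in
`X × Bool` with the product topology. -/
theorem nhds_false_inf_principal_image_true_le [T1Space X] {D : Set X} {x y : X}
    (h : 𝓝[D \ {x}] x ≤ 𝓝[≠] y) :
    (𝓝 (x, false) : Filter (AD X)) ⊓ 𝓟 ((fun u => ((u, true) : AD X)) '' D) ≤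
      (𝓝 (y, false) : Filter (AD X)) := by
  intro S hS
  obtain ⟨S', hS'S, hS', hyS'⟩ := mem_nhds_iff.1 hS
  obtain ⟨V, hV, hyV, hVS'⟩ := isOpen_iff.1 hS' y hyS'
  have hX : ∀ᶠ u in 𝓝 x, u ∈ D \ {x} → u ∈ V \ {y} :=
    mem_nhdsWithin_iff_eventually.1 (h (sdiff_mem_nhdsWithin_compl (hV.mem_nhds hyV) _))
  rw [mem_inf_principal]
  have hne : ∀ᶠ q in (𝓝 (x, false) : Filter (AD X)), q ≠ (x, true) :=
    compl_singleton_mem_nhds (by rintro ⟨⟩)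
  filter_upwards [(continuous_fst.tendsto ((x, false) : AD X)).eventually hX, hne]
    with q hqV hqx
  rintro ⟨u, hu, rfl⟩
  have hux : u ≠ x := fun hux => hqx (by rw [hux])
  obtain ⟨huV, huy⟩ := hqV ⟨hu, hux⟩
  exact hS'S (hVS' u huV true fun h => absurd h huy)

theorem continuous_of_forall_nhdsWithin_le [T1Space X] {r : X → X} (hr : Continuous r)
    {D : Set X} (hD : ∀ x, 𝓝[D \ {x}] x ≤ 𝓝[≠] (r x)) {R : AD X → AD X}
    (hR1 : ∀ x ∈ D, R (x, true) = (x, true)) (hR2 : ∀ x ∉ D, R (x, true) = (r x, false))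
    (hR3 : ∀ x, R (x, false) = (r x, false)) : Continuous R := by
  refine continuous_iff_continuousAt.2 fun ⟨x, b⟩ => ?_
  cases b with
  | true =>
    exact (tendsto_pure_nhds R _).mono_left
      ((isOpen_singleton_iff_nhds_eq_pure _).1 (isOpen_singleton_true x)).le
  | false =>
    have hg : Tendsto (β := AD X) (fun q : AD X => (r q.1, false)) (𝓝 (x, false))
        (𝓝 (r x, false)) :=
      (continuous_mk_false.comp (hr.comp continuous_fst)).tendsto _
    show Tendsto R _ _
    rw [hR3]
    refine fun S hS => mem_map.2 ?_
    have hDS := mem_inf_principal.1 (nhds_false_inf_principal_image_true_le (hD x) hS)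
    filter_upwards [hg hS, hDS]
      with ⟨u, b⟩ hgS hDS
    cases b with
    | false =>
      show R (u, false) ∈ S
      rwa [hR3]
    | true =>
      show R (u, true) ∈ S
      by_cases hu : u ∈ D
      · rw [hR1 u hu]
        exact hDS ⟨u, hu, rfl⟩
      · rwa [hR2 u hu]

end AD

theorem alexandroff_duplicate_retraction_general {X : Type*} [TopologicalSpace X] [T2Space X]
    (r : X → X) (hrc : Continuous r) (hrr : ∀ x, r (r x) = r x)
    (A B Y : Set X)
    (hA : A ⊆ Set.range r)
    (hBY : Disjoint B Y)
    (hdisc : ∀ x ∈ B, ∃ U : Set X, IsOpen U ∧ x ∈ U ∧ U ∩ Yᶜ ∩ B = {x})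
    (hclBr : closure B \ B ⊆ Set.range r)
    (R : AD X → AD X)
    (hR1 : ∀ x ∈ A ∪ B, R (x, true) = (x, true))
    (hR2 : ∀ x ∉ A ∪ B, R (x, true) = (r x, false))
    (hR3 : ∀ x : X, R (x, false) = (r x, false)) :
    Continuous R ∧ ∀ q : AD X, R (R q) = R q := by
  have hfix : ∀ x ∈ Set.range r, r x = x := by
    rintro _ ⟨y, rfl⟩
    exact hrr y
  have hBdisc : IsDiscrete B := isDiscrete_iff_forall_mem_exists_isOpen.2 fun x hx => by
    obtain ⟨U, hU, hxU, hUB⟩ := hdisc x hx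
    refine ⟨U, hU, ?_⟩
    rwa [inter_right_comm,
      inter_eq_left.2 (inter_subset_right.trans hBY.subset_compl_right)] at hUB
  have hD : ∀ x, 𝓝[(A ∪ B) \ {x}] x ≤ 𝓝[≠] (r x) :=
    nhdsWithin_union_diff_singleton_le_nhdsNE hrc (fun x hx => hfix x (hA hx)) hBdisc
      fun x hx => hfix x (hclBr hx)
  exact ⟨AD.continuous_of_forall_nhdsWithin_le hrc hD hR1 hR2 hR3,
    AD.apply_apply_of_idempotent hrr hR1 hR2 hR3⟩

/-- Lemma 4.5: Under the stated hypotheses on `r`, `A`, `B`, `Y`, the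
map `R` on the Alexandroff duplicate fixing `(A ∪ B) × {1}` and sending everything else
via `r` into `X × {0}` is a continuous retraction of `AD X`. -/
theorem alexandroff_duplicate_retraction {X : Type*} [TopologicalSpace X] [CompactSpace X]
    [T2Space X]
    (r : X → X) (hrc : Continuous r) (hrr : ∀ x, r (r x) = r x)
    (A B Y : Set X)
    (hA : A ⊆ Set.range r) (hBc : B.Countable)
    (hBY : Disjoint B Y)
    (hdisc : ∀ x ∈ B, ∃ U : Set X, IsOpen U ∧ x ∈ U ∧ U ∩ Yᶜ ∩ B = {x})
    (hclB : closure B \ B ⊆ Y)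
    (hclBr : closure B \ B ⊆ Set.range r)
    (R : AD X → AD X)
    (hR1 : ∀ x ∈ A ∪ B, R (x, true) = (x, true))
    (hR2 : ∀ x ∉ A ∪ B, R (x, true) = (r x, false))
    (hR3 : ∀ x : X, R (x, false) = (r x, false)) :
    Continuous R ∧ ∀ q : AD X, R (R q) = R q :=
  alexandroff_duplicate_retraction_general r hrc hrr A B Y hA hBY hdisc hclBr R hR1 hR2 hR3
end

section
/- Let X be a compact Hausdorff space and {R_{(A,B)}} the retractions on AD(X) from the previous statement. For (A,B) ⪯ (A',B') in Γ (i.e. A ⊆ A', B ⊆ B'), one has R_{(A,B)} = R_{(A,B)} ∘ R_{(A',B')} = R_{(A',B')} ∘ R_{(A,B)}, and R_{(A,B)}(AD(X)) = (r_{(A,B)}(X) × {0}) ∪ ((A ∪ B) × {1}), which is a cosmic space. -/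
/-- A space has a countable network. -/
def HasCountableNetwork (Y : Type*) [TopologicalSpace Y] : Prop :=
  ∃ N : Set (Set Y), N.Countable ∧
    ∀ (y : Y) (U : Set Y), IsOpen U → y ∈ U → ∃ n ∈ N, y ∈ n ∧ n ⊆ U

/-- An r-skeleton on a space `X` indexed by a poset `Γ`. -/
def IsRSkeleton (X : Type*) [TopologicalSpace X] (Γ : Type*) [Preorder Γ]
    (r : Γ → X → X) : Prop :=
  (∀ s t : Γ, ∃ u, s ≤ u ∧ t ≤ u) ∧
  (∀ c : ℕ →o Γ, ∃ s, IsLUB (Set.range c) s) ∧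
  (∀ s, Continuous (r s)) ∧
  (∀ s x, r s (r s x) = r s x) ∧
  (∀ s, HasCountableNetwork (Set.range (r s))) ∧
  (∀ s t, s ≤ t → ∀ x, r s (r t x) = r s x ∧ r t (r s x) = r s x) ∧
  (∀ (c : ℕ →o Γ) (s : Γ), IsLUB (Set.range c) s →
    ∀ x, Filter.Tendsto (fun n => r (c n) x) Filter.atTop (nhds (r s x))) ∧
  (∀ x, Filter.Tendsto (fun s => r s x) Filter.atTop (nhds x))

/-- For the retractions `R_{(A,B)}` on `AD X` built from an r-skeleton
`{r_{(A,B)}}` on `X`, one has `R_{(A,B)} = R_{(A,B)} ∘ R_{(A',B')} = R_{(A',B')} ∘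
R_{(A,B)}` for `(A,B) ⪯ (A',B')`, and the image of `R_{(A,B)}` is
`(r_{(A,B)}(X) × {0}) ∪ ((A ∪ B) × {1})`, a cosmic space. -/
theorem AD_retractions_comm_and_range {X : Type u} [TopologicalSpace X] [CompactSpace X]
    [T2Space X]
    (Y : Set X)
    (Γ : Set ({A : Set X // A ⊆ Y ∧ A.Countable} × {B : Set X // B ⊆ Yᶜ ∧ B.Countable}))
    (hσ : ∀ c : ℕ →o {A : Set X // A ⊆ Y ∧ A.Countable} ×
        {B : Set X // B ⊆ Yᶜ ∧ B.Countable},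
      (∀ n, c n ∈ Γ) → ∀ p, IsLUB (Set.range c) p → p ∈ Γ)
    (hcof : ∀ p : {A : Set X // A ⊆ Y ∧ A.Countable} ×
        {B : Set X // B ⊆ Yᶜ ∧ B.Countable}, ∃ q ∈ Γ, p ≤ q)
    (r : Γ → X → X) (hr : IsRSkeleton X Γ r)
    (hY : Y = ⋃ p : Γ, Set.range (r p))
    (hdisc : ∀ B : Set X, B ⊆ Yᶜ → B.Countable →
      ∀ x ∈ B, ∃ U : Set X, IsOpen U ∧ x ∈ U ∧ U ∩ Yᶜ ∩ B = {x})
    (hcl : ∀ B : Set X, B ⊆ Yᶜ → B.Countable →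
      closure B \ B ⊆ Y ∧ HasCountableNetwork (closure B \ B : Set X))
    (hmem : ∀ p : Γ, (p.1.1 : Set X) ⊆ Set.range (r p) ∧
      closure (p.1.2 : Set X) \ (p.1.2 : Set X) ⊆ Set.range (r p))
    (R : Γ → AD X → AD X)
    (hR1 : ∀ (p : Γ) (x : X), x ∈ (p.1.1 : Set X) ∪ (p.1.2 : Set X) →
      R p (x, true) = (x, true))
    (hR2 : ∀ (p : Γ) (x : X), x ∉ (p.1.1 : Set X) ∪ (p.1.2 : Set X) →
      R p (x, true) = (r p x, false))
    (hR3 : ∀ (p : Γ) (x : X), R p (x, false) = (r p x, false)) :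
    (∀ p q : Γ, p ≤ q → ∀ z : AD X, R p (R q z) = R p z ∧ R q (R p z) = R p z) ∧
    (∀ p : Γ,
      Set.range (R p) =
        ((Set.range (r p) ×ˢ ({false} : Set Bool)) ∪
          (((p.1.1 : Set X) ∪ (p.1.2 : Set X)) ×ˢ ({true} : Set Bool)) : Set (X × Bool)) ∧
      HasCountableNetwork (Set.range (R p))) := by
  obtain ⟨-, -, -, hidem, hnet, hcoh, -, -⟩ := hr
  have hrange : ∀ p : Γ, Set.range (R p) =
      ((Set.range (r p) ×ˢ ({false} : Set Bool)) ∪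
        (((p.1.1 : Set X) ∪ (p.1.2 : Set X)) ×ˢ ({true} : Set Bool)) : Set (X × Bool)) := by
    intro p
    ext z
    obtain ⟨z1, z2⟩ := z
    constructor
    · rintro ⟨⟨y, b⟩, hw⟩
      cases b with
      | false =>
        rw [hR3] at hw
        rw [show ((z1, z2) : X × Bool) = (r p y, false) from hw.symm]
        exact Or.inl ⟨⟨y, rfl⟩, rfl⟩
      | true =>
        by_cases hy : y ∈ (p.1.1 : Set X) ∪ (p.1.2 : Set X)
        · rw [hR1 p y hy] at hw
          rw [show ((z1, z2) : X × Bool) = (y, true) from hw.symm]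
          exact Or.inr ⟨hy, rfl⟩
        · rw [hR2 p y hy] at hw
          rw [show ((z1, z2) : X × Bool) = (r p y, false) from hw.symm]
          exact Or.inl ⟨⟨y, rfl⟩, rfl⟩
    · rintro (⟨⟨x, hx⟩, hb⟩ | ⟨hx, hb⟩)
      · refine ⟨(x, false), ?_⟩
        rw [hR3]
        simp only [Set.mem_singleton_iff] at hb
        rw [hx, hb]
      · refine ⟨(z1, true), ?_⟩
        simp only [Set.mem_singleton_iff] at hb
        rw [hR1 p z1 hx, hb]
  constructor
  · intro p q hpq z
    have hA : (p.1.1 : Set X) ⊆ (q.1.1 : Set X) := hpq.1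
    have hB : (p.1.2 : Set X) ⊆ (q.1.2 : Set X) := hpq.2
    obtain ⟨x, b⟩ := z
    cases b with
    | false =>
      rw [hR3 q x, hR3 p x, hR3 p, hR3 q, (hcoh p q hpq x).1, (hcoh p q hpq x).2]
      exact ⟨rfl, rfl⟩
    | true =>
      by_cases hx : x ∈ (p.1.1 : Set X) ∪ (p.1.2 : Set X)
      · have hx' : x ∈ (q.1.1 : Set X) ∪ (q.1.2 : Set X) := hx.imp (@hA x) (@hB x)
        rw [hR1 q x hx', hR1 p x hx, hR1 q x hx']
        exact ⟨rfl, rfl⟩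
      · by_cases hx' : x ∈ (q.1.1 : Set X) ∪ (q.1.2 : Set X)
        · rw [hR1 q x hx', hR2 p x hx, hR3 q, (hcoh p q hpq x).2]
          exact ⟨rfl, rfl⟩
        · rw [hR2 q x hx', hR2 p x hx, hR3 p, hR3 q, (hcoh p q hpq x).1,
            (hcoh p q hpq x).2]
          exact ⟨rfl, rfl⟩
  · intro p
    refine ⟨hrange p, ?_⟩
    have hmemf : ∀ y : X, y ∈ Set.range (r p) →
        ((y, false) : X × Bool) ∈ Set.range (R p) := by
      rintro y ⟨w, rfl⟩
      exact ⟨(w, false), hR3 p w⟩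
    set f : Set.range (r p) → Set.range (R p) :=
      fun y => ⟨((y : X), false), hmemf y y.2⟩ with hf
    obtain ⟨Nr, hNrc, hNr⟩ := hnet p
    set S : Set (Set.range (R p)) := {z | ∃ x : X, z.1 = ((x, true) : AD X)} with hSdef
    have hScount : S.Countable := by
      haveI : Countable ((p.1.1 : Set X) ∪ (p.1.2 : Set X) : Set X) :=
        (p.1.1.2.2.union p.1.2.2.2).to_subtype
      set g : ((p.1.1 : Set X) ∪ (p.1.2 : Set X) : Set X) → Set.range (R p) :=
        fun x => ⟨((x : X), true), by rw [hrange p]; exact Or.inr ⟨x.2, rfl⟩⟩ with hg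
      refine (Set.countable_range g).mono ?_
      rintro z ⟨x, hx⟩
      have hz2 : (z : AD X) ∈ Set.range (R p) := z.2
      rw [hx] at hz2
      rw [hrange p] at hz2
      rcases hz2 with h1 | h2
      · simpa using h1.2
      · exact ⟨⟨x, h2.1⟩, Subtype.ext hx.symm⟩
    refine ⟨((Set.image f) '' Nr) ∪ ((fun z => {z}) '' S), ?_, ?_⟩
    · exact (hNrc.image _).union (hScount.image _)
    · rintro ⟨⟨zx, zb⟩, hzmem⟩ U hU hzU
      obtain ⟨T, hT, rfl⟩ := isOpen_induced_iff.mp hU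
      cases zb with
      | true =>
        exact ⟨{⟨(zx, true), hzmem⟩}, Or.inr ⟨⟨(zx, true), hzmem⟩, ⟨zx, rfl⟩, rfl⟩, rfl,
          Set.singleton_subset_iff.mpr hzU⟩
      | false =>
        have hxr : zx ∈ Set.range (r p) := by
          have hz3 : ((zx, false) : X × Bool) ∈ Set.range (R p) := hzmem
          rw [hrange p] at hz3
          rcases hz3 with h1 | h2
          · exact h1.1
          · simpa using h2.2
        have hzT : ((zx, false) : X × Bool) ∈ T := hzU
        obtain ⟨V, hVopen, hxV, hVsub⟩ := hT zx hzT
        have hVr : IsOpen (Subtype.val ⁻¹' V : Set (Set.range (r p))) :=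
          hVopen.preimage continuous_subtype_val
        obtain ⟨m, hmNr, hxm, hmV⟩ := hNr ⟨zx, hxr⟩ _ hVr hxV
        refine ⟨f '' m, Or.inl ⟨m, hmNr, rfl⟩, ?_, ?_⟩
        · exact ⟨⟨zx, hxr⟩, hxm, Subtype.ext rfl⟩
        · rintro w ⟨y, hym, rfl⟩
          apply hVsub
          refine ⟨⟨hmV hym, trivial⟩, ?_⟩
          intro hcon
          have h2 : (((y : X), false) : X × Bool) = ((zx, true) : X × Bool) := hcon
          simpa using congrArg Prod.snd h2
end

section
/- For any ordinal space [0,κ] with κ infinite, the map r_A(x) = max{y ∈ A : y ≤ x}, for A a countable closed subset of [0,κ] containing 0 all of whose isolated points are isolated in [0,κ], is a well-defined continuous retraction of [0,κ] onto A; moreover, if A ⊆ B are two such sets then r_A ∘ r_B = r_B ∘ r_A = r_A. -/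
/-!
The greatest point of `A` below `x` exists because `A ∩ [0, x]` is closed, nonempty and bounded
above, hence contains its supremum. In a successor order every `Iic x` is open, so continuity of
the monotone map `r` only has to be checked from the left; there `r` is locally constant near `x`
unless `r x = x`, and a point of `A` that is not isolated in `[0,κ]` is not isolated in `A`
either, hence a limit of points of `A` from below. Finally `r_A ∘ r_B = r_A` because `r_A x` is
also the greatest point of `A` below `r_B x`.
-/

open Set Filter Topology Order

def IsFloorMap {α : Type*} [LinearOrder α] (A : Set α) (r : α → α) : Prop :=
  ∀ x, IsGreatest {y | y ∈ A ∧ y ≤ x} (r x)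

namespace IsFloorMap

variable {α : Type*} [LinearOrder α] {A B : Set α} {r s : α → α}

theorem mem (hr : IsFloorMap A r) (x : α) : r x ∈ A := (hr x).1.1

theorem le (hr : IsFloorMap A r) (x : α) : r x ≤ x := (hr x).1.2

theorem le_of_mem (hr : IsFloorMap A r) {a x : α} (ha : a ∈ A) (hax : a ≤ x) : a ≤ r x :=
  (hr x).2 ⟨ha, hax⟩

theorem eq_of_mem (hr : IsFloorMap A r) {a : α} (ha : a ∈ A) : r a = a :=
  (hr.le a).antisymm (hr.le_of_mem ha le_rfl)

theorem map_map (hr : IsFloorMap A r) (x : α) : r (r x) = r x := hr.eq_of_mem (hr.mem x)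

theorem range_eq (hr : IsFloorMap A r) : range r = A :=
  Subset.antisymm (range_subset_iff.2 hr.mem) fun a ha => ⟨a, hr.eq_of_mem ha⟩

theorem monotone (hr : IsFloorMap A r) : Monotone r := fun _ _ hxy =>
  hr.le_of_mem (hr.mem _) ((hr.le _).trans hxy)

theorem map_map_of_subset (hr : IsFloorMap A r) (hs : IsFloorMap B s) (hAB : A ⊆ B) (x : α) :
    r (s x) = r x :=
  (hr.monotone (hs.le x)).antisymm
    (hr.le_of_mem (hr.mem x) (hs.le_of_mem (hAB (hr.mem x)) (hr.le x)))

theorem map_map_of_superset (hr : IsFloorMap A r) (hs : IsFloorMap B s) (hAB : A ⊆ B)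
    (x : α) : s (r x) = r x :=
  hs.eq_of_mem (hAB (hr.mem x))

end IsFloorMap

theorem exists_isFloorMap {α : Type*} [ConditionallyCompleteLinearOrder α] [TopologicalSpace α]
    [OrderTopology α] {A : Set α} (hA : IsClosed A) (hlow : ∀ x, ∃ a ∈ A, a ≤ x) :
    ∃ r, IsFloorMap A r :=
  ⟨fun x => sSup (A ∩ Iic x), fun x =>
    (hA.inter isClosed_Iic).isGreatest_csSup (hlow x) ⟨x, fun _ hy => hy.2⟩⟩

section SuccOrder

variable {α : Type*} [LinearOrder α] [TopologicalSpace α] [OrderTopology α] [SuccOrder α]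

theorem isOpen_Iic_of_succOrder (x : α) : IsOpen (Iic x) := by
  by_cases hx : IsMax x
  · rw [show Iic x = univ from eq_univ_of_forall hx.isTop]
    exact isOpen_univ
  · rw [← Iio_succ_of_not_isMax hx]
    exact isOpen_Iio

theorem exists_mem_Ioo_of_not_isOpen_singleton {A : Set α}
    (hA : ∀ x ∈ A, (∃ U : Set α, IsOpen U ∧ U ∩ A = {x}) → IsOpen ({x} : Set α))
    {x b : α} (hx : x ∈ A) (hxo : ¬IsOpen ({x} : Set α)) (hbx : b < x) :
    ∃ a ∈ A, b < a ∧ a < x := by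
  by_contra! hno
  refine hxo (hA x hx ⟨Ioc b x, isOpen_Ioi.inter (isOpen_Iic_of_succOrder x), ?_⟩)
  ext z
  constructor
  · rintro ⟨⟨hbz, hzx⟩, hz⟩
    exact hzx.antisymm (hno z hz hbz)
  · rintro rfl
    exact ⟨⟨hbx, le_rfl⟩, hx⟩

theorem IsFloorMap.continuous {A : Set α} {r : α → α} (hr : IsFloorMap A r)
    (hA : ∀ x ∈ A, (∃ U : Set α, IsOpen U ∧ U ∩ A = {x}) → IsOpen ({x} : Set α)) :
    Continuous r := by
  refine continuous_iff_continuousAt.2 fun x => tendsto_order.2 ⟨fun b hb => ?_, fun b hb => ?_⟩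
  · by_cases hxo : IsOpen ({x} : Set α)
    · filter_upwards [hxo.mem_nhds rfl] with y hy
      rwa [mem_singleton_iff.1 hy]
    obtain ⟨a, haA, hba, hax⟩ : ∃ a ∈ A, b < a ∧ a < x := by
      rcases (hr.le x).lt_or_eq with hlt | heq
      · exact ⟨r x, hr.mem x, hb, hlt⟩
      · exact exists_mem_Ioo_of_not_isOpen_singleton hA (heq ▸ hr.mem x) hxo (heq ▸ hb)
    filter_upwards [isOpen_Ioi.mem_nhds hax] with y hy
    exact hba.trans_le (hr.le_of_mem haA hy.le)
  · filter_upwards [(isOpen_Iic_of_succOrder x).mem_nhds le_rfl] with y hy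
    exact (hr.monotone hy).trans_lt hb

end SuccOrder

theorem ordinal_space_retractions_general (κ : Cardinal.{0})
    (A B : Set (Set.Iic κ.ord))
    (hAcl : IsClosed A)
    (hA0 : (⟨0, Set.mem_Iic.mpr zero_le⟩ : Set.Iic κ.ord) ∈ A)
    (hAiso : ∀ x ∈ A, (∃ U : Set (Set.Iic κ.ord), IsOpen U ∧ U ∩ A = {x}) →
      IsOpen ({x} : Set (Set.Iic κ.ord)))
    (hBcl : IsClosed B)
    (hB0 : (⟨0, Set.mem_Iic.mpr zero_le⟩ : Set.Iic κ.ord) ∈ B)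
    (hBiso : ∀ x ∈ B, (∃ U : Set (Set.Iic κ.ord), IsOpen U ∧ U ∩ B = {x}) →
      IsOpen ({x} : Set (Set.Iic κ.ord)))
    (hAB : A ⊆ B) :
    ∃ rA rB : Set.Iic κ.ord → Set.Iic κ.ord,
      (∀ x, IsGreatest {y | y ∈ A ∧ y ≤ x} (rA x)) ∧
      (∀ x, IsGreatest {y | y ∈ B ∧ y ≤ x} (rB x)) ∧
      Continuous rA ∧ (∀ x, rA (rA x) = rA x) ∧ Set.range rA = A ∧
      Continuous rB ∧ (∀ x, rB (rB x) = rB x) ∧ Set.range rB = B ∧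
      (∀ x, rA (rB x) = rA x) ∧ (∀ x, rB (rA x) = rA x) := by
  -- `Iic κ.ord` gets its conditionally complete order from being order-connected and inhabited.
  let : Inhabited (Set.Iic κ.ord) := ⟨⊥⟩
  obtain ⟨rA, hrA⟩ := exists_isFloorMap hAcl fun _ => ⟨_, hA0, bot_le⟩
  obtain ⟨rB, hrB⟩ := exists_isFloorMap hBcl fun _ => ⟨_, hB0, bot_le⟩
  exact ⟨rA, rB, hrA, hrB, hrA.continuous hAiso, hrA.map_map, hrA.range_eq,
    hrB.continuous hBiso, hrB.map_map, hrB.range_eq, hrA.map_map_of_subset hrB hAB,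
    hrA.map_map_of_superset hrB hAB⟩

/-- Example 4.10, the skeleton on `[0,κ]`: For a countable closed
subset `A` of the ordinal space `[0,κ]` containing `0` whose isolated points are isolated
in `[0,κ]`, the map `x ↦ max {y ∈ A : y ≤ x}` is a well-defined continuous retraction of
`[0,κ]` onto `A`; for `A ⊆ B` as above, the corresponding retractions satisfy
`r_A ∘ r_B = r_B ∘ r_A = r_A`. -/
theorem ordinal_space_retractions (κ : Cardinal.{0}) (hκ : Cardinal.aleph0 ≤ κ)
    (A B : Set (Set.Iic κ.ord))
    (hAc : A.Countable) (hAcl : IsClosed A)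
    (hA0 : (⟨0, Set.mem_Iic.mpr zero_le⟩ : Set.Iic κ.ord) ∈ A)
    (hAiso : ∀ x ∈ A, (∃ U : Set (Set.Iic κ.ord), IsOpen U ∧ U ∩ A = {x}) →
      IsOpen ({x} : Set (Set.Iic κ.ord)))
    (hBc : B.Countable) (hBcl : IsClosed B)
    (hB0 : (⟨0, Set.mem_Iic.mpr zero_le⟩ : Set.Iic κ.ord) ∈ B)
    (hBiso : ∀ x ∈ B, (∃ U : Set (Set.Iic κ.ord), IsOpen U ∧ U ∩ B = {x}) →
      IsOpen ({x} : Set (Set.Iic κ.ord)))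
    (hAB : A ⊆ B) :
    ∃ rA rB : Set.Iic κ.ord → Set.Iic κ.ord,
      (∀ x, IsGreatest {y | y ∈ A ∧ y ≤ x} (rA x)) ∧
      (∀ x, IsGreatest {y | y ∈ B ∧ y ≤ x} (rB x)) ∧
      Continuous rA ∧ (∀ x, rA (rA x) = rA x) ∧ Set.range rA = A ∧
      Continuous rB ∧ (∀ x, rB (rB x) = rB x) ∧ Set.range rB = B ∧
      (∀ x, rA (rB x) = rA x) ∧ (∀ x, rB (rA x) = rA x) :=
  ordinal_space_retractions_general κ A B hAcl hA0 hAiso hBcl hB0 hBiso hAB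
end
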